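/- Suppose ū ∈ 𝕌 satisfies: (i) the variational inequality: for every u ∈ 𝕌 and every i ∈ {1, ..., N}, ∫₀ᵀ (λ_i ū_i − p_i)(u_i − ū_i) dt ≥ 0; and (ii) the second-order condition: J''(ū)[h, h] > 0 for every critical direction h ∈ C_ū with h ≠ 0. Then J satisfies a quadratic growth condition at ū: there exist δ > 0 and ε > 0 such that J(u) ≥ J(ū) + (ε/2) ‖u − ū‖²_{L²([0,T];ℝ^N)} for all u ∈ 𝕌 with ‖u − ū‖_{L²([0,T];ℝ^N)} < δ. In particular, ū is a strict local minimizer of J on 𝕌. -/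

import Mathlib

/-!
Argue by contradiction. If quadratic growth fails, there are admissible `uₖ → ū` with
`J uₖ < J ū + ‖uₖ - ū‖² / (2 (k + 1))`. A second-order Taylor expansion with Hölder remainder,
together with `J'(ū)(uₖ - ū) ≥ 0`, shows that the unit directions `hₖ = (uₖ - ū) / ‖uₖ - ū‖`
satisfy `J'(ū) hₖ → 0` and `J''(ū)[hₖ, hₖ] ≤ βₖ → 0`. A subsequence converges weakly to some `h`.
The sign constraints on `hₖ`, including the pointwise form of the variational inequality, survive
weak limits, and `J'(ū) h = 0`, so `h ∈ C_ū`. As `J''(ū)` is a coercive form minus the weakly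
continuous `Q`, it is weakly lower semicontinuous, whence `J''(ū)[h, h] ≤ 0`; and `h ≠ 0`, since
otherwise `Q(hₖ, hₖ) → 0` while `Σ λᵢ ‖hₖᵢ‖² ≥ min λᵢ`. This contradicts the second-order condition.
-/

open MeasureTheory Filter Topology

noncomputable section

/-- The underlying measure of `L²([0,T])`: Lebesgue measure restricted to `[0,T]`. -/
abbrev ctrlMeasure (T : ℝ) : Measure ℝ := volume.restrict (Set.Icc 0 T)

/-- The control space `L²([0,T]; ℝ^N)`. -/
abbrev CtrlSpace (T : ℝ) (N : ℕ) := Lp (EuclideanSpace ℝ (Fin N)) 2 (ctrlMeasure T)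

/-- The set of admissible controls
`𝕌 = {u ∈ L²([0,T];ℝ^N) : a_i ≤ u_i ≤ b_i a.e. on [0,T] for every i}`. -/
def admissibleSet {T : ℝ} {N : ℕ} (a b : CtrlSpace T N) : Set (CtrlSpace T N) :=
  {u | ∀ i : Fin N, ∀ᵐ t ∂(ctrlMeasure T), a t i ≤ u t i ∧ u t i ≤ b t i}

/-- The cone of critical directions `C_ū`: all `h ∈ L²([0,T];ℝ^N)` such that for every `i`
and a.e. `t ∈ [0,T]`: `h_i(t) ≥ 0` if `ū_i(t) = a_i(t)`, `h_i(t) ≤ 0` if `ū_i(t) = b_i(t)`,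
and `h_i(t) = 0` if `λ_i ū_i(t) − p_i(t) ≠ 0`. -/
def criticalCone {T : ℝ} {N : ℕ} (a b ubar p : CtrlSpace T N) (lam : Fin N → ℝ) :
    Set (CtrlSpace T N) :=
  {h | ∀ i : Fin N, ∀ᵐ t ∂(ctrlMeasure T),
      (ubar t i = a t i → 0 ≤ h t i) ∧ (ubar t i = b t i → h t i ≤ 0) ∧
      (lam i * ubar t i - p t i ≠ 0 → h t i = 0)}

section WeakConvergence

variable {H : Type*} [NormedAddCommGroup H] [InnerProductSpace ℝ H]

def WeakTendsto (h : ℕ → H) (h₀ : H) : Prop :=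
  ∀ w : H, Tendsto (fun k => inner ℝ (h k) w) atTop (𝓝 (inner ℝ h₀ w))

theorem WeakTendsto.tendsto_apply [CompleteSpace H] {h : ℕ → H} {h₀ : H}
    (hw : WeakTendsto h h₀) (f : H →L[ℝ] ℝ) :
    Tendsto (fun k => f (h k)) atTop (𝓝 (f h₀)) := by
  have key : ∀ x, f x = inner ℝ x ((InnerProductSpace.toDual ℝ H).symm f) := fun x => by
    rw [real_inner_comm, InnerProductSpace.toDual_symm_apply]
  simpa only [key] using hw ((InnerProductSpace.toDual ℝ H).symm f)

theorem weakTendsto_subseq_of_bounded [CompleteSpace H] [TopologicalSpace.SeparableSpace H]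
    {h : ℕ → H} {R : ℝ} (hR : ∀ k, ‖h k‖ ≤ R) :
    ∃ h₀ : H, ∃ φ : ℕ → ℕ, StrictMono φ ∧ WeakTendsto (h ∘ φ) h₀ := by
  obtain ⟨f, -, φ, hφ, hlim⟩ := WeakDual.isSeqCompact_closedBall ℝ H 0 R
    (x := fun k => StrongDual.toWeakDual (InnerProductSpace.toDual ℝ H (h k)))
    (fun k => by simpa using hR k)
  refine ⟨(InnerProductSpace.toDual ℝ H).symm (WeakDual.toStrongDual f), φ, hφ, fun w => ?_⟩
  simpa [Function.comp_def] using ((WeakDual.eval_continuous w).tendsto f).comp hlim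

theorem WeakTendsto.form_le [CompleteSpace H] {h : ℕ → H} {h₀ : H} (hw : WeakTendsto h h₀)
    {B Q : H →L[ℝ] H →L[ℝ] ℝ} (hA : ∀ x, 0 ≤ B x x + Q x x)
    (hQ : Tendsto (fun k => Q (h k) (h k)) atTop (𝓝 (Q h₀ h₀)))
    {β : ℕ → ℝ} (hβ : Tendsto β atTop (𝓝 0)) (hle : ∀ k, B (h k) (h k) ≤ β k) :
    B h₀ h₀ ≤ 0 := by
  set A := B + Q
  -- expanding `0 ≤ A (h k - h₀) (h k - h₀)` bounds `A (h k) (h k)` below by terms linear in `h k`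
  have hlower : ∀ k, A (h k) h₀ + A h₀ (h k) - A h₀ h₀ - Q (h k) (h k) ≤ β k := fun k => by
    have := hA (h k - h₀)
    simp only [A, map_sub, sub_apply, add_apply] at this ⊢
    linarith [hle k]
  have hlim := (((hw.tendsto_apply (A.flip h₀)).add (hw.tendsto_apply (A h₀))).sub_const
    (A h₀ h₀)).sub hQ
  have := le_of_tendsto_of_tendsto' hlim hβ hlower
  simp only [ContinuousLinearMap.flip_apply, A, add_apply] at this
  linarith

theorem ne_zero_of_form_le {h : ℕ → H} {h₀ : H} {B Q : H →L[ℝ] H →L[ℝ] ℝ} {c : ℝ}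
    (hc : 0 < c) (hA : ∀ x, c * ‖x‖ ^ 2 ≤ B x x + Q x x) (hnorm : ∀ k, ‖h k‖ = 1)
    (hQ : Tendsto (fun k => Q (h k) (h k)) atTop (𝓝 (Q h₀ h₀)))
    {β : ℕ → ℝ} (hβ : Tendsto β atTop (𝓝 0)) (hle : ∀ k, B (h k) (h k) ≤ β k) :
    h₀ ≠ 0 := by
  rintro rfl
  have hc_le : ∀ k, c ≤ β k + Q (h k) (h k) := fun k => by
    have := hA (h k)
    rw [hnorm k] at this
    linarith [hle k]
  have := ge_of_tendsto (hβ.add hQ) (Eventually.of_forall hc_le)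
  simp only [map_zero, add_zero] at this
  linarith

end WeakConvergence

section Taylor

open Set

variable {E : Type*} [NormedAddCommGroup E] [NormedSpace ℝ E]
  {J : E → ℝ} {J' : E → E →L[ℝ] ℝ} {J'' : E → E →L[ℝ] E →L[ℝ] ℝ} {O K : Set E} {x : E} {C γ : ℝ}

theorem abs_sub_taylor_two_le {u v : E}
    (hJ' : ∀ s ∈ Icc (0 : ℝ) 1, HasFDerivAt J (J' (u + s • (v - u))) (u + s • (v - u)))
    (hJ'' : ∀ s ∈ Icc (0 : ℝ) 1, HasFDerivAt J' (J'' (u + s • (v - u))) (u + s • (v - u)))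
    {K : ℝ} (hK : ∀ s ∈ Icc (0 : ℝ) 1, ‖J'' (u + s • (v - u)) - J'' u‖ ≤ K) :
    |J v - J u - J' u (v - u) - 1 / 2 * J'' u (v - u) (v - u)| ≤ K * ‖v - u‖ ^ 2 := by
  set d := v - u
  have hc : ∀ s : ℝ, HasDerivAt (fun s : ℝ => u + s • d) d s := fun s => by
    simpa using ((hasDerivAt_id s).smul_const d).const_add u
  have hq : ∀ s ∈ Icc (0 : ℝ) 1, |J' (u + s • d) d - J' u d - s * J'' u d d| ≤ K * ‖d‖ ^ 2 * s := by
    intro s hs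
    have := norm_image_sub_le_of_norm_deriv_le_segment'
      (f := fun s => J' (u + s • d) d - s * J'' u d d)
      (f' := fun s => J'' (u + s • d) d d - J'' u d d) (C := K * ‖d‖ ^ 2)
      (fun s hs => ?_) (fun s hs => ?_) s hs
    · simpa [Real.norm_eq_abs, sub_right_comm] using this
    · have h1 := (ContinuousLinearMap.apply ℝ ℝ d).hasFDerivAt.comp_hasDerivAt s
        ((hJ'' s hs).comp_hasDerivAt s (hc s))
      exact (h1.sub ((hasDerivAt_id s).mul_const (J'' u d d) |>.congr_deriv (one_mul _)))
        |>.hasDerivWithinAt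
    · calc ‖J'' (u + s • d) d d - J'' u d d‖ = ‖(J'' (u + s • d) - J'' u) d d‖ := rfl
        _ ≤ ‖J'' (u + s • d) - J'' u‖ * ‖d‖ * ‖d‖ := ContinuousLinearMap.le_opNorm₂ _ _ _
        _ ≤ K * ‖d‖ ^ 2 := by
          rw [sq, ← mul_assoc]
          gcongr
          exact hK s (Ico_subset_Icc_self hs)
  have hg := norm_image_sub_le_of_norm_deriv_le_segment_01'
    (f := fun s => J (u + s • d) - s * J' u d - s ^ 2 / 2 * J'' u d d)
    (f' := fun s => J' (u + s • d) d - J' u d - s * J'' u d d) (C := K * ‖d‖ ^ 2)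
    (fun s hs => ?_) (fun s hs => ?_)
  · rw [Real.norm_eq_abs] at hg
    convert hg using 2
    simp only [one_smul, zero_smul, add_zero, d, add_sub_cancel]
    ring
  · have h1 := (hJ' s hs).comp_hasDerivAt s (hc s)
    have h2 := ((hasDerivAt_pow 2 s).div_const 2).mul_const (J'' u d d)
    refine ((h1.sub ((hasDerivAt_id s).mul_const (J' u d))).sub h2).congr_deriv ?_
      |>.hasDerivWithinAt
    simp
  · refine (hq s (Ico_subset_Icc_self hs)).trans (mul_le_of_le_one_right ?_ hs.2.le)
    have hK0 : 0 ≤ K := (norm_nonneg (J'' (u + (0 : ℝ) • d) - J'' u)).trans (hK 0 (by simp))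
    positivity


theorem abs_sub_taylor_two_le_of_holder (hJ' : ∀ u ∈ O, HasFDerivAt J (J' u) u)
    (hJ'' : ∀ u ∈ O, HasFDerivAt J' (J'' u) u) (hKO : K ⊆ O) (hK : Convex ℝ K) (hx : x ∈ K)
    (hC : 0 ≤ C) (hγ : 0 ≤ γ) (hHolder : ∀ u ∈ K, ‖J'' u - J'' x‖ ≤ C * ‖u - x‖ ^ γ)
    {u : E} (hu : u ∈ K) :
    |J u - J x - J' x (u - x) - 1 / 2 * J'' x (u - x) (u - x)| ≤
      C * ‖u - x‖ ^ γ * ‖u - x‖ ^ 2 := by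
  have hseg : ∀ s ∈ Icc (0 : ℝ) 1, x + s • (u - x) ∈ K := fun s hs =>
    hK.add_smul_sub_mem hx hu hs
  refine abs_sub_taylor_two_le (fun s hs => hJ' _ (hKO (hseg s hs)))
    (fun s hs => hJ'' _ (hKO (hseg s hs))) (fun s hs => (hHolder _ (hseg s hs)).trans ?_)
  rw [add_sub_cancel_left, norm_smul, Real.norm_of_nonneg hs.1]
  exact mul_le_mul_of_nonneg_left (Real.rpow_le_rpow (mul_nonneg hs.1 (norm_nonneg _))
    (mul_le_of_le_one_left (norm_nonneg _) hs.2) hγ) hC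

theorem variations_le_of_lt_quadratic_model (hJ' : ∀ u ∈ O, HasFDerivAt J (J' u) u)
    (hJ'' : ∀ u ∈ O, HasFDerivAt J' (J'' u) u) (hKO : K ⊆ O) (hK : Convex ℝ K) (hx : x ∈ K)
    (hC : 0 ≤ C) (hγ : 0 ≤ γ) (hHolder : ∀ u ∈ K, ‖J'' u - J'' x‖ ≤ C * ‖u - x‖ ^ γ)
    (hfo : ∀ u ∈ K, 0 ≤ J' x (u - x)) {u : E} (hu : u ∈ K) (hux : u ≠ x) {ε : ℝ}
    (hlt : J u < J x + ε / 2 * ‖u - x‖ ^ 2) :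
    J'' x (‖u - x‖⁻¹ • (u - x)) (‖u - x‖⁻¹ • (u - x)) ≤ ε + 2 * C * ‖u - x‖ ^ γ ∧
      J' x (‖u - x‖⁻¹ • (u - x)) ≤
        ‖u - x‖ * (ε / 2 + C * ‖u - x‖ ^ γ + ‖J'' x‖ / 2) := by
  set ρ := ‖u - x‖
  set h := ρ⁻¹ • (u - x)
  have hρ : 0 < ρ := norm_pos_iff.2 (sub_ne_zero.2 hux)
  have hdir : u - x = ρ • h := (smul_inv_smul₀ hρ.ne' _).symm
  have hA : 0 ≤ J' x h := by
    simpa [h] using mul_nonneg (inv_nonneg.2 hρ.le) (hfo u hu)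
  have hh : ‖h‖ = 1 := by simp [h, ρ, norm_smul, hρ.ne']
  clear_value h
  have hB : -‖J'' x‖ ≤ J'' x h h := by
    have := (J'' x).le_opNorm₂ h h
    rw [hh, mul_one, mul_one, Real.norm_eq_abs] at this
    exact neg_le_of_abs_le this
  have htaylor := abs_sub_taylor_two_le_of_holder hJ' hJ'' hKO hK hx hC hγ hHolder hu
  have h1 : J' x (u - x) = ρ * J' x h := by rw [hdir, map_smul, smul_eq_mul]
  have h2 : J'' x (u - x) (u - x) = ρ ^ 2 * J'' x h h := by
    rw [hdir, map_smul, map_smul, smul_apply, smul_eq_mul, smul_eq_mul]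
    ring
  rw [h1, h2] at htaylor
  have key : ρ * J' x h + ρ ^ 2 * (J'' x h h / 2) ≤ ρ ^ 2 * (ε / 2 + C * ρ ^ γ) := by
    linarith [neg_abs_le (J u - J x - ρ * J' x h - 1 / 2 * (ρ ^ 2 * J'' x h h))]
  constructor
  · have : ρ ^ 2 * (J'' x h h / 2) ≤ ρ ^ 2 * (ε / 2 + C * ρ ^ γ) := by
      nlinarith [mul_nonneg hρ.le hA]
    linarith [le_of_mul_le_mul_left this (by positivity)]
  · have : ρ * J' x h ≤ ρ * (ρ * (ε / 2 + C * ρ ^ γ + ‖J'' x‖ / 2)) := by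
      nlinarith [mul_le_mul_of_nonneg_left hB (sq_nonneg ρ)]
    exact le_of_mul_le_mul_left this hρ

theorem exists_seq_of_not_quadratic_growth (hJ' : ∀ u ∈ O, HasFDerivAt J (J' u) u)
    (hJ'' : ∀ u ∈ O, HasFDerivAt J' (J'' u) u) (hKO : K ⊆ O) (hK : Convex ℝ K) (hx : x ∈ K)
    (hC : 0 ≤ C) (hγ : 0 < γ) (hHolder : ∀ u ∈ K, ‖J'' u - J'' x‖ ≤ C * ‖u - x‖ ^ γ)
    (hfo : ∀ u ∈ K, 0 ≤ J' x (u - x))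
    (hnot : ∀ δ > (0 : ℝ), ∀ ε > (0 : ℝ), ∃ u ∈ K, ‖u - x‖ < δ ∧ J u < J x + ε / 2 * ‖u - x‖ ^ 2) :
    ∃ h : ℕ → E, (∀ k, ‖h k‖ = 1) ∧ (∀ k, ∃ r : ℝ, 0 ≤ r ∧ ∃ u ∈ K, h k = r • (u - x)) ∧
      Tendsto (fun k => J' x (h k)) atTop (𝓝 0) ∧
      ∃ β : ℕ → ℝ, Tendsto β atTop (𝓝 0) ∧ ∀ k, J'' x (h k) (h k) ≤ β k := by
  choose u hu hδ hε using fun k : ℕ =>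
    hnot (1 / ((k : ℝ) + 1)) (by positivity) (1 / ((k : ℝ) + 1)) (by positivity)
  have hux : ∀ k, u k ≠ x := fun k hk => by simpa [hk] using hε k
  have hρ : Tendsto (fun k => ‖u k - x‖) atTop (𝓝 0) :=
    squeeze_zero (fun k => norm_nonneg _) (fun k => (hδ k).le)
      tendsto_one_div_add_atTop_nhds_zero_nat
  have hργ : Tendsto (fun k => ‖u k - x‖ ^ γ) atTop (𝓝 0) := by
    simpa [Real.zero_rpow hγ.ne'] using hρ.rpow_const (Or.inr hγ.le)
  have hbounds := fun k => variations_le_of_lt_quadratic_model hJ' hJ'' hKO hK hx hC hγ.le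
    hHolder hfo (hu k) (hux k) (hε k)
  refine ⟨fun k => ‖u k - x‖⁻¹ • (u k - x), fun k => ?_,
    fun k => ⟨_, by positivity, u k, hu k, rfl⟩,
    squeeze_zero (fun k => ?_) (fun k => (hbounds k).2) ?_, _, ?_, fun k => (hbounds k).1⟩
  · simp [norm_smul, sub_ne_zero.2 (hux k)]
  · simpa using mul_nonneg (inv_nonneg.2 (norm_nonneg (u k - x))) (hfo _ (hu k))
  · simpa using hρ.mul (((tendsto_one_div_add_atTop_nhds_zero_nat.div_const 2).add
      (hργ.const_mul C)).add_const (‖J'' x‖ / 2))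
  · simpa using tendsto_one_div_add_atTop_nhds_zero_nat.add (hργ.const_mul (2 * C))

end Taylor

section Coordinates

variable {α ι : Type*} [MeasurableSpace α] {μ : Measure α} [Fintype ι]

theorem MeasureTheory.Lp.memLp_coord (g : Lp (EuclideanSpace ℝ ι) 2 μ) (i : ι) :
    MemLp (fun t => g t i) 2 μ :=
  (EuclideanSpace.proj (𝕜 := ℝ) i).comp_memLp g

theorem MeasureTheory.Lp.measurable_coord (g : Lp (EuclideanSpace ℝ ι) 2 μ) (i : ι) :
    Measurable fun t => g t i :=
  (EuclideanSpace.proj (𝕜 := ℝ) i).continuous.measurable.comp (Lp.stronglyMeasurable g).measurable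

theorem MeasureTheory.Lp.integral_mul_coord_sub (d : α → ℝ) (u v : Lp (EuclideanSpace ℝ ι) 2 μ)
    (i : ι) :
    ∫ t, d t * (u - v) t i ∂μ = ∫ t, d t * (u t i - v t i) ∂μ := by
  refine integral_congr_ae ?_
  filter_upwards [Lp.coeFn_sub u v] with t ht
  rw [ht]
  rfl

theorem MeasureTheory.Lp.integrable_coord_mul (f g : Lp (EuclideanSpace ℝ ι) 2 μ) (i : ι) :
    Integrable (fun t => f t i * g t i) μ :=
  (Lp.memLp_coord f i).integrable_mul (Lp.memLp_coord g i)

theorem MeasureTheory.Lp.norm_sq_eq_sum_integral (g : Lp (EuclideanSpace ℝ ι) 2 μ) :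
    ‖g‖ ^ 2 = ∑ i, ∫ t, g t i * g t i ∂μ := by
  rw [← real_inner_self_eq_norm_sq, L2.inner_def,
    ← integral_finsetSum _ fun i _ => Lp.integrable_coord_mul g g i]
  congr 1 with t

theorem MeasureTheory.Lp.mul_norm_sq_le_sum_mul_integral {c : ℝ} {lam : ι → ℝ}
    (hc : ∀ i, c ≤ lam i) (g : Lp (EuclideanSpace ℝ ι) 2 μ) :
    c * ‖g‖ ^ 2 ≤ ∑ i, lam i * ∫ t, g t i * g t i ∂μ := by
  rw [Lp.norm_sq_eq_sum_integral, Finset.mul_sum]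
  exact Finset.sum_le_sum fun i _ =>
    mul_le_mul_of_nonneg_right (hc i) (integral_nonneg fun t => mul_self_nonneg _)

theorem MeasureTheory.Lp.inner_indicatorConstLp_single [DecidableEq ι]
    (g : Lp (EuclideanSpace ℝ ι) 2 μ) (i : ι) (c : ℝ) {s : Set α} (hs : MeasurableSet s)
    (hμs : μ s ≠ ⊤) :
    inner ℝ g (indicatorConstLp 2 hs hμs (EuclideanSpace.single i c)) = ∫ t in s, c * g t i ∂μ := by
  rw [real_inner_comm, L2.inner_indicatorConstLp_eq_setIntegral_inner]
  simp [EuclideanSpace.inner_single_left]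

theorem WeakTendsto.ae_nonneg_mul_coord [IsFiniteMeasure μ] [DecidableEq ι]
    {h : ℕ → Lp (EuclideanSpace ℝ ι) 2 μ} {h₀ : Lp (EuclideanSpace ℝ ι) 2 μ}
    (hw : WeakTendsto h h₀) (i : ι) (c : ℝ) {S : Set α}
    (hS : MeasurableSet S) (hk : ∀ k, ∀ᵐ t ∂μ, t ∈ S → 0 ≤ c * h k t i) :
    ∀ᵐ t ∂μ, t ∈ S → 0 ≤ c * h₀ t i := by
  rw [← ae_restrict_iff' hS]
  refine ae_nonneg_restrict_of_forall_setIntegral_nonneg_inter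
    (((Lp.memLp_coord h₀ i).integrable one_le_two).const_mul c).integrableOn fun s hs _ => ?_
  have hsS := hs.inter hS
  have hlim := hw (indicatorConstLp 2 hsS (measure_ne_top μ _) (EuclideanSpace.single i c))
  simp only [Lp.inner_indicatorConstLp_single] at hlim
  refine ge_of_tendsto' hlim fun k => setIntegral_nonneg_ae hsS ?_
  filter_upwards [hk k] with t ht hts using ht hts.2

end Coordinates

theorem exists_pos_forall_le {ι : Type*} [Finite ι] {f : ι → ℝ} (hf : ∀ i, 0 < f i) :
    ∃ c > 0, ∀ i, c ≤ f i := by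
  rcases isEmpty_or_nonempty ι with hι | hι
  · exact ⟨1, one_pos, fun i => isEmptyElim i⟩
  · obtain ⟨j, hj⟩ := Finite.exists_min f
    exact ⟨f j, hf j, hj⟩

section ControlProblem

variable {T : ℝ} {N : ℕ}

instance CtrlSpace.separableSpace : TopologicalSpace.SeparableSpace (CtrlSpace T N) :=
  haveI : Fact ((2 : ENNReal) ≠ ⊤) := ⟨ENNReal.ofNat_ne_top⟩
  inferInstance

theorem convex_admissibleSet (a b : CtrlSpace T N) : Convex ℝ (admissibleSet a b) := by
  intro u hu v hv s r hs hr hsr i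
  filter_upwards [Lp.coeFn_add (s • u) (r • v), Lp.coeFn_smul s u, Lp.coeFn_smul r v, hu i, hv i]
    with t hadd hsu hrv hut hvt
  simp only [hadd, Pi.add_apply, hsu, hrv, Pi.smul_apply, PiLp.add_apply, PiLp.smul_apply,
    smul_eq_mul]
  obtain rfl : r = 1 - s := by linarith
  constructor <;> nlinarith

theorem exists_mem_admissibleSet_ae_eq_piecewise {a b u v : CtrlSpace T N}
    (hu : u ∈ admissibleSet a b) (hv : v ∈ admissibleSet a b) {s : Set ℝ} (hs : MeasurableSet s) :
    ∃ w ∈ admissibleSet a b, ∀ᵐ t ∂(ctrlMeasure T), (t ∈ s → w t = u t) ∧ (t ∉ s → w t = v t) := by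
  classical
  have hmem := ((Lp.memLp u).restrict s).piecewise hs ((Lp.memLp v).restrict sᶜ)
  refine ⟨hmem.toLp _, fun i => ?_, ?_⟩
  · filter_upwards [hmem.coeFn_toLp, hu i, hv i] with t ht hut hvt
    by_cases hts : t ∈ s <;> simp [ht, hts, hut, hvt]
  · filter_upwards [hmem.coeFn_toLp] with t ht
    exact ⟨fun hts => by simp [ht, hts], fun hts => by simp [ht, hts]⟩

/-- Tested with `u` patched into `ubar` on arbitrary measurable sets, the integral inequality
becomes pointwise. -/
theorem ae_nonneg_mul_sub_of_forall_integral_nonneg {a b ubar : CtrlSpace T N}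
    (hubar : ubar ∈ admissibleSet a b) {i : Fin N} {d : ℝ → ℝ} (hd : MemLp d 2 (ctrlMeasure T))
    (hVI : ∀ u ∈ admissibleSet a b, 0 ≤ ∫ t, d t * (u t i - ubar t i) ∂(ctrlMeasure T))
    {u : CtrlSpace T N} (hu : u ∈ admissibleSet a b) :
    ∀ᵐ t ∂(ctrlMeasure T), 0 ≤ d t * (u t i - ubar t i) := by
  refine ae_nonneg_of_forall_setIntegral_nonneg
    (hd.integrable_mul ((Lp.memLp_coord u i).sub (Lp.memLp_coord ubar i))) fun s hs _ => ?_
  obtain ⟨w, hw, hws⟩ := exists_mem_admissibleSet_ae_eq_piecewise hu hubar hs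
  refine (hVI w hw).trans_eq ?_
  rw [← integral_indicator hs]
  refine integral_congr_ae ?_
  filter_upwards [hws] with t ht
  by_cases hts : t ∈ s <;> simp [hts, ht]

/-- A weakly closed cone containing every feasible direction `r • (u - ubar)`; the critical cone
is its part on which `J'(ubar)` vanishes. -/
def signCone (a b ubar p : CtrlSpace T N) (lam : Fin N → ℝ) : Set (CtrlSpace T N) :=
  {h | ∀ i : Fin N, ∀ᵐ t ∂(ctrlMeasure T),
      (ubar t i = a t i → 0 ≤ h t i) ∧ (ubar t i = b t i → h t i ≤ 0) ∧
      0 ≤ (lam i * ubar t i - p t i) * h t i}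

theorem smul_sub_mem_signCone {a b ubar p u : CtrlSpace T N} {lam : Fin N → ℝ}
    (hubar : ubar ∈ admissibleSet a b)
    (hVI : ∀ u ∈ admissibleSet a b, ∀ i : Fin N,
        0 ≤ ∫ t, (lam i * ubar t i - p t i) * (u t i - ubar t i) ∂(ctrlMeasure T))
    (hu : u ∈ admissibleSet a b) {r : ℝ} (hr : 0 ≤ r) :
    r • (u - ubar) ∈ signCone a b ubar p lam := by
  intro i
  have hd := ((Lp.memLp_coord ubar i).const_mul (lam i)).sub (Lp.memLp_coord p i)
  filter_upwards [Lp.coeFn_smul r (u - ubar), Lp.coeFn_sub u ubar, hu i,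
    ae_nonneg_mul_sub_of_forall_integral_nonneg hubar hd (hVI · · i) hu] with t hsmul hsub hut hpw
  simp only [hsmul, hsub, Pi.smul_apply, Pi.sub_apply, PiLp.smul_apply, PiLp.sub_apply, smul_eq_mul]
  refine ⟨fun ha => mul_nonneg hr (by linarith [hut.1]),
    fun hb => mul_nonpos_of_nonneg_of_nonpos hr (by linarith [hut.2]), ?_⟩
  rw [mul_left_comm]
  exact mul_nonneg hr hpw

theorem WeakTendsto.mem_signCone {a b ubar p : CtrlSpace T N} {lam : Fin N → ℝ}
    {h : ℕ → CtrlSpace T N} {h₀ : CtrlSpace T N} (hw : WeakTendsto h h₀)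
    (hk : ∀ k, h k ∈ signCone a b ubar p lam) : h₀ ∈ signCone a b ubar p lam := by
  intro i
  have hd : Measurable fun t => lam i * ubar t i - p t i :=
    ((Lp.measurable_coord ubar i).const_mul (lam i)).sub (Lp.measurable_coord p i)
  have ha := hw.ae_nonneg_mul_coord i 1
    (measurableSet_eq_fun (Lp.measurable_coord ubar i) (Lp.measurable_coord a i))
    fun k => (hk k i).mono fun t ht hS => by simpa using ht.1 hS
  have hb := hw.ae_nonneg_mul_coord i (-1)
    (measurableSet_eq_fun (Lp.measurable_coord ubar i) (Lp.measurable_coord b i))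
    fun k => (hk k i).mono fun t ht hS => by simpa using ht.2.1 hS
  have hpos := hw.ae_nonneg_mul_coord i 1 (measurableSet_lt (measurable_const (a := (0 : ℝ))) hd)
    fun k => (hk k i).mono fun t ht hS => by simpa using (mul_nonneg_iff_of_pos_left hS).1 ht.2.2
  have hneg := hw.ae_nonneg_mul_coord i (-1) (measurableSet_lt hd (measurable_const (a := (0 : ℝ))))
    fun k => (hk k i).mono fun t ht hS => by nlinarith [ht.2.2, show _ < (0 : ℝ) from hS]
  filter_upwards [ha, hb, hpos, hneg] with t hat hbt hpt hnt
  refine ⟨fun h => by simpa using hat h, fun h => by simpa using hbt h, ?_⟩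
  rcases lt_trichotomy (lam i * ubar t i - p t i) 0 with hlt | heq | hgt
  · nlinarith [hnt hlt]
  · simp [heq]
  · nlinarith [hpt hgt]

theorem mem_criticalCone_of_mem_signCone {a b ubar p h : CtrlSpace T N} {lam : Fin N → ℝ}
    (hh : h ∈ signCone a b ubar p lam)
    (hsum : ∑ i : Fin N, ∫ t, (lam i * ubar t i - p t i) * h t i ∂(ctrlMeasure T) = 0) :
    h ∈ criticalCone a b ubar p lam := by
  have hnn : ∀ i, 0 ≤ᵐ[ctrlMeasure T] fun t => (lam i * ubar t i - p t i) * h t i :=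
    fun i => (hh i).mono fun t ht => ht.2.2
  have hzero := (Finset.sum_eq_zero_iff_of_nonneg fun i _ => integral_nonneg_of_ae (hnn i)).1 hsum
  intro i
  have hint := (((Lp.memLp_coord ubar i).const_mul (lam i)).sub (Lp.memLp_coord p i)).integrable_mul
    (Lp.memLp_coord h i)
  filter_upwards [hh i, (integral_eq_zero_iff_of_nonneg_ae (hnn i) hint).1
    (hzero i (Finset.mem_univ i))] with t ht hz
  exact ⟨ht.1, ht.2.1, fun hd => (mul_eq_zero.1 hz).resolve_left hd⟩

end ControlProblem

theorem second_order_sufficient_condition_general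
    (T : ℝ) (N : ℕ) (a b : CtrlSpace T N)
    (lam : Fin N → ℝ) (hlam : ∀ i, 0 < lam i)
    (p : CtrlSpace T N)
    (O : Set (CtrlSpace T N)) (hUO : admissibleSet a b ⊆ O)
    (J : CtrlSpace T N → ℝ)
    (J' : CtrlSpace T N → (CtrlSpace T N →L[ℝ] ℝ))
    (J'' : CtrlSpace T N → (CtrlSpace T N →L[ℝ] CtrlSpace T N →L[ℝ] ℝ))
    (hJ' : ∀ u ∈ O, HasFDerivAt J (J' u) u)
    (hJ'' : ∀ u ∈ O, HasFDerivAt J' (J'' u) u)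
    -- (1) Hölder continuity of the second derivative on 𝕌:
    (C γ : ℝ) (hC : 0 < C) (hγ : 0 < γ ∧ γ ≤ 1)
    (hHolder : ∀ u ∈ admissibleSet a b, ∀ v ∈ admissibleSet a b,
        ‖J'' u - J'' v‖ ≤ C * ‖u - v‖ ^ γ)
    (ubar : CtrlSpace T N) (hubar : ubar ∈ admissibleSet a b)
    -- (2) first-order representation at ū:
    (hJ'rep : ∀ h : CtrlSpace T N,
        J' ubar h = ∑ i : Fin N, ∫ t, (lam i * ubar t i - p t i) * h t i ∂(ctrlMeasure T))
    -- (3) second-order structure at ū: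
    (Q : CtrlSpace T N →L[ℝ] CtrlSpace T N →L[ℝ] ℝ)
    (hQweak : ∀ (h : ℕ → CtrlSpace T N) (h₀ : CtrlSpace T N),
        (∀ w : CtrlSpace T N,
          Tendsto (fun k => (inner ℝ (h k) w : ℝ)) atTop (nhds (inner ℝ h₀ w))) →
        Tendsto (fun k => Q (h k) (h k)) atTop (nhds (Q h₀ h₀)))
    (hJ''rep : ∀ h htilde : CtrlSpace T N,
        J'' ubar h htilde
          = (∑ i : Fin N, lam i * ∫ t, h t i * htilde t i ∂(ctrlMeasure T)) - Q h htilde)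
    -- (i) the variational inequality:
    (hVI : ∀ u ∈ admissibleSet a b, ∀ i : Fin N,
        0 ≤ ∫ t, (lam i * ubar t i - p t i) * (u t i - ubar t i) ∂(ctrlMeasure T))
    -- (ii) the second-order condition on the critical cone:
    (hSOC : ∀ h ∈ criticalCone a b ubar p lam, h ≠ 0 → 0 < J'' ubar h h) :
    ∃ δ > (0:ℝ), ∃ ε > (0:ℝ), ∀ u ∈ admissibleSet a b,
      ‖u - ubar‖ < δ → J ubar + ε / 2 * ‖u - ubar‖ ^ 2 ≤ J u := by
  have hfo : ∀ u ∈ admissibleSet a b, 0 ≤ J' ubar (u - ubar) := fun u hu => by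
    rw [hJ'rep]
    exact Finset.sum_nonneg fun i _ => (Lp.integral_mul_coord_sub _ u ubar i).symm ▸ hVI u hu i
  by_contra! hnot
  obtain ⟨h, hnorm, hdir, hJ'h, β, hβ, hJ''h⟩ := exists_seq_of_not_quadratic_growth hJ' hJ'' hUO
    (convex_admissibleSet a b) hubar hC.le hγ.1 (fun u hu => hHolder u hu ubar hubar) hfo hnot
  obtain ⟨h₀, φ, hφ, hw⟩ := weakTendsto_subseq_of_bounded fun k => (hnorm k).le
  have hcone : h₀ ∈ criticalCone a b ubar p lam := by
    refine mem_criticalCone_of_mem_signCone (hw.mem_signCone fun k => ?_) ?_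
    · obtain ⟨r, hr, u, hu, hk⟩ := hdir (φ k)
      simpa only [Function.comp_apply, hk] using smul_sub_mem_signCone hubar hVI hu hr
    · rw [← hJ'rep]
      exact tendsto_nhds_unique (hw.tendsto_apply _) (hJ'h.comp hφ.tendsto_atTop)
  obtain ⟨c, hc, hcle⟩ := exists_pos_forall_le hlam
  have hcoer : ∀ g, c * ‖g‖ ^ 2 ≤ J'' ubar g g + Q g g := fun g => by
    simpa [hJ''rep] using Lp.mul_norm_sq_le_sum_mul_integral hcle g
  have hQ := hQweak _ _ hw
  have hβφ := hβ.comp hφ.tendsto_atTop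
  have hne := ne_zero_of_form_le hc hcoer (fun k => hnorm (φ k)) hQ hβφ fun k => hJ''h (φ k)
  have hle := hw.form_le (fun g => (by positivity : 0 ≤ c * ‖g‖ ^ 2).trans (hcoer g)) hQ hβφ
    fun k => hJ''h (φ k)
  exact (hSOC h₀ hcone hne).not_ge hle

/-- **Second-order sufficient optimality condition.**
Suppose `ū ∈ 𝕌` satisfies (i) the variational inequality
`∫₀ᵀ (λ_i ū_i − p_i)(u_i − ū_i) dt ≥ 0` for all `u ∈ 𝕌` and all `i`, and (ii) the
second-order condition `J''(ū)[h,h] > 0` for every critical direction `h ∈ C_ū \ {0}`.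
Here `J` is twice continuously Fréchet differentiable on an open set `O ⊇ 𝕌` with the
structural properties of the reduced cost functional: Hölder continuity of `J''` on `𝕌`,
the first-order representation `J'(ū)[h] = Σ_i ∫₀ᵀ (λ_i ū_i − p_i) h_i dt`, and the
second-order structure `J''(ū)[h,h̃] = Σ_i λ_i ⟨h_i,h̃_i⟩_{L²} − Q(h,h̃)` with a continuous
bilinear form `Q` turning weak convergence into convergence of the quadratic values.
Then `J` satisfies a quadratic growth condition at `ū`: there exist `δ > 0` and `ε > 0`
such that `J(u) ≥ J(ū) + (ε/2)‖u − ū‖²` for all `u ∈ 𝕌` with `‖u − ū‖ < δ`; in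
particular `ū` is a strict local minimizer of `J` on `𝕌`. -/
theorem second_order_sufficient_condition
    (T : ℝ) (hT : 0 < T) (N : ℕ) (a b : CtrlSpace T N)
    (hab : ∀ i : Fin N, ∀ᵐ t ∂(ctrlMeasure T), a t i ≤ 0 ∧ 0 ≤ b t i)
    (lam : Fin N → ℝ) (hlam : ∀ i, 0 < lam i)
    (p : CtrlSpace T N)
    (O : Set (CtrlSpace T N)) (hO : IsOpen O) (hUO : admissibleSet a b ⊆ O)
    (J : CtrlSpace T N → ℝ)
    (J' : CtrlSpace T N → (CtrlSpace T N →L[ℝ] ℝ))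
    (J'' : CtrlSpace T N → (CtrlSpace T N →L[ℝ] CtrlSpace T N →L[ℝ] ℝ))
    (hJ' : ∀ u ∈ O, HasFDerivAt J (J' u) u)
    (hJ'' : ∀ u ∈ O, HasFDerivAt J' (J'' u) u)
    (hJ''cont : ContinuousOn J'' O)
    -- (1) Hölder continuity of the second derivative on 𝕌:
    (C γ : ℝ) (hC : 0 < C) (hγ : 0 < γ ∧ γ ≤ 1)
    (hHolder : ∀ u ∈ admissibleSet a b, ∀ v ∈ admissibleSet a b,
        ‖J'' u - J'' v‖ ≤ C * ‖u - v‖ ^ γ)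
    (ubar : CtrlSpace T N) (hubar : ubar ∈ admissibleSet a b)
    -- (2) first-order representation at ū:
    (hJ'rep : ∀ h : CtrlSpace T N,
        J' ubar h = ∑ i : Fin N, ∫ t, (lam i * ubar t i - p t i) * h t i ∂(ctrlMeasure T))
    -- (3) second-order structure at ū:
    (Q : CtrlSpace T N →L[ℝ] CtrlSpace T N →L[ℝ] ℝ)
    (hQweak : ∀ (h : ℕ → CtrlSpace T N) (h₀ : CtrlSpace T N),
        (∀ w : CtrlSpace T N,
          Tendsto (fun k => (inner ℝ (h k) w : ℝ)) atTop (nhds (inner ℝ h₀ w))) →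
        Tendsto (fun k => Q (h k) (h k)) atTop (nhds (Q h₀ h₀)))
    (hJ''rep : ∀ h htilde : CtrlSpace T N,
        J'' ubar h htilde
          = (∑ i : Fin N, lam i * ∫ t, h t i * htilde t i ∂(ctrlMeasure T)) - Q h htilde)
    -- (i) the variational inequality:
    (hVI : ∀ u ∈ admissibleSet a b, ∀ i : Fin N,
        0 ≤ ∫ t, (lam i * ubar t i - p t i) * (u t i - ubar t i) ∂(ctrlMeasure T))
    -- (ii) the second-order condition on the critical cone:
    (hSOC : ∀ h ∈ criticalCone a b ubar p lam, h ≠ 0 → 0 < J'' ubar h h) :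
    ∃ δ > (0:ℝ), ∃ ε > (0:ℝ), ∀ u ∈ admissibleSet a b,
      ‖u - ubar‖ < δ → J ubar + ε / 2 * ‖u - ubar‖ ^ 2 ≤ J u :=
  second_order_sufficient_condition_general T N a b lam hlam p O hUO J J' J'' hJ' hJ'' C γ hC hγ
    hHolder ubar hubar hJ'rep Q hQweak hJ''rep hVI hSOC

end
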